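/- arXiv:1307.3062 — 2 statements merged into one kernel-verified Lean document; each statement's English description precedes it below -/
import Mathlib

section
/- For n ≥ 0, Σ_{m=0}^{n} C(n+1,m) (-1)^{n-m} T_m^{(r,k)}(λ) = Σ_{l=0}^{n} Σ_{m=0}^{l} (-1)^{l-m} C(l,m) C(n+1,l+1) B_m^{(k-1)} H_{n-l}^{(r)}(λ). -/
open PowerSeries Finset

/-- e^{xt} as a formal power series. -/
noncomputable def expX (x : ℂ) : PowerSeries ℂ := rescale x (exp ℂ)

/-- 1 - e^{-t} as a formal power series. -/
noncomputable def oneSubExpNeg : PowerSeries ℂ := 1 - rescale (-1) (exp ℂ)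

/-- Li_k(1-e^{-t}) = Σ_{m≥1} (1-e^{-t})^m / m^k as a formal power series. -/
noncomputable def polyLogC (k : ℤ) : PowerSeries ℂ :=
  mk fun n => ∑ m ∈ Finset.Icc 1 n, (coeff n (oneSubExpNeg ^ m)) * ((m : ℂ) ^ k)⁻¹

/-- integer power of a power series (inverse via `PowerSeries.inv`). -/
noncomputable def zpowS (f : PowerSeries ℂ) (r : ℤ) : PowerSeries ℂ :=
  f ^ r.toNat * (f⁻¹) ^ (-r).toNat

/-- (1-λ)/(e^t-λ). -/
noncomputable def feBase (l : ℂ) : PowerSeries ℂ :=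
  C (1 - l) * (exp ℂ - C l)⁻¹

/-- exponential generating function Σ f(n) t^n/n!. -/
noncomputable def GF (f : ℕ → ℂ) : PowerSeries ℂ := mk fun n => f n / n.factorial

/-- Stirling numbers of the second kind: (e^t-1)^m = m! Σ_l S2(l,m) t^l/l!. -/
noncomputable def S2 (n m : ℕ) : ℂ :=
  (n.factorial : ℂ) / (m.factorial : ℂ) * coeff n ((exp ℂ - 1) ^ m)

/-! Everything is read off exponential generating functions: a product of EGFs is the EGF of the
binomial convolution, and `d/dt` shifts an EGF. For `x = 1 - e^{-t}`, the chain rule and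
`z Li_j'(z) = Li_{j-1}(z)` give `x · (Li_k ∘ x)' = x' · Li_{k-1}(x) = e^{-t} · x · Σ B_m t^m/m!`,
so `(Li_k ∘ x)' = e^{-t} Σ B_m t^m/m!`, whose coefficients are the inner sums on the right.
Comparing the coefficients of `t^{n+1}` in `x · Σ T_m t^m/m! = Li_k(x) · Σ H_m t^m/m!` then gives
the identity. -/

namespace PowerSeries

section Polylog

variable (K : Type*) [Field K]

/-- The polylogarithm `Li_j(z) = ∑_{m ≥ 1} z^m / m^j`; the constant term is set to `0` by hand
because `0 ^ j` is `1` for `j = 0`. -/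
noncomputable def polylog (j : ℤ) : K⟦X⟧ :=
  mk fun m => if m = 0 then 0 else ((m : K) ^ j)⁻¹

variable {K}

theorem X_mul_derivative_polylog [CharZero K] (j : ℤ) :
    X * d⁄dX K (polylog K j) = polylog K (j - 1) := by
  ext n
  rcases n with _ | n
  · simp [polylog]
  · have hn : ((n + 1 : ℕ) : K) ≠ 0 := Nat.cast_ne_zero.mpr n.succ_ne_zero
    rw [coeff_succ_X_mul, coeff_derivative]
    simp only [polylog, coeff_mk, n.succ_ne_zero, if_false, zpow_sub_one₀ hn]
    push_cast
    field_simp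

theorem coeff_subst_polylog {f : K⟦X⟧} (hf : constantCoeff f = 0) (j : ℤ) (n : ℕ) :
    coeff n ((polylog K j).subst f) = ∑ m ∈ Icc 1 n, coeff n (f ^ m) * ((m : K) ^ j)⁻¹ := by
  rw [coeff_subst' (HasSubst.of_constantCoeff_zero' hf),
    finsum_eq_sum_of_support_subset (s := Icc 1 n)]
  · refine sum_congr rfl fun m hm => ?_
    rw [polylog, coeff_mk, if_neg (by grind), smul_eq_mul, mul_comm]
  · intro m hm
    rw [Function.mem_support] at hm
    rw [coe_Icc, Set.mem_Icc]
    by_contra! hout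
    apply hm
    rcases Nat.eq_zero_or_pos m with rfl | hpos
    · simp [polylog]
    · have hdvd : X ^ m ∣ f ^ m := pow_dvd_pow_of_dvd (X_dvd_iff.mpr hf) m
      rw [X_pow_dvd_iff.mp hdvd n (by grind), smul_zero]

/-- `z Li_j'(z) = Li_{j-1}(z)`, transported along the chain rule. -/
theorem mul_derivative_subst_polylog [CharZero K] {f : K⟦X⟧} (hf : constantCoeff f = 0) (j : ℤ) :
    f * d⁄dX K ((polylog K j).subst f) = d⁄dX K f * (polylog K (j - 1)).subst f := by
  have hs := HasSubst.of_constantCoeff_zero' hf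
  rw [derivative_subst hs, ← X_mul_derivative_polylog, subst_mul hs, subst_X hs]
  ring

end Polylog

end PowerSeries

noncomputable def binomConv (a b : ℕ → ℂ) (n : ℕ) : ℂ :=
  ∑ m ∈ range (n + 1), (n.choose m : ℂ) * a m * b (n - m)

theorem coeff_GF (a : ℕ → ℂ) (n : ℕ) : coeff n (GF a) = a n / n.factorial :=
  coeff_mk _ _

theorem GF_injective : Function.Injective GF := by
  intro a b h
  funext n
  have := congrArg (coeff n) h
  rwa [coeff_GF, coeff_GF, div_left_inj' (Nat.cast_ne_zero.mpr n.factorial_ne_zero)] at this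

theorem GF_factorial_mul_coeff (F : ℂ⟦X⟧) : GF (fun n => n.factorial * coeff n F) = F := by
  ext n
  rw [coeff_GF, mul_div_cancel_left₀ _ (Nat.cast_ne_zero.mpr n.factorial_ne_zero)]

theorem GF_mul_GF (a b : ℕ → ℂ) : GF a * GF b = GF (binomConv a b) := by
  ext n
  rw [coeff_mul, Nat.sum_antidiagonal_eq_sum_range_succ_mk, coeff_GF, binomConv, sum_div]
  refine sum_congr rfl fun m hm => ?_
  have hmn : m ≤ n := Nat.lt_succ_iff.mp (mem_range.mp hm)
  have := Nat.cast_ne_zero (R := ℂ) |>.mpr n.factorial_ne_zero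
  rw [coeff_GF, coeff_GF, Nat.cast_choose ℂ hmn]
  field_simp

theorem derivative_GF (a : ℕ → ℂ) : d⁄dX ℂ (GF a) = GF fun n => a (n + 1) := by
  ext n
  rw [coeff_derivative, coeff_GF, coeff_GF, Nat.factorial_succ]
  push_cast
  field_simp

theorem rescale_neg_one_exp_eq_GF : rescale (-1) (exp ℂ) = GF fun n => (-1) ^ n := by
  ext n
  simp [coeff_rescale, coeff_exp, coeff_GF, div_eq_mul_inv]

theorem oneSubExpNeg_eq_GF : oneSubExpNeg = GF fun n => if n = 0 then 0 else -(-1) ^ n := by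
  ext n
  simp [oneSubExpNeg, coeff_rescale, coeff_exp, coeff_GF, coeff_one, div_eq_mul_inv]
  split_ifs <;> simp_all

theorem constantCoeff_oneSubExpNeg : constantCoeff oneSubExpNeg = 0 := by
  rw [← coeff_zero_eq_constantCoeff_apply, oneSubExpNeg_eq_GF, coeff_GF]
  simp

theorem derivative_oneSubExpNeg : d⁄dX ℂ oneSubExpNeg = rescale (-1) (exp ℂ) := by
  rw [oneSubExpNeg_eq_GF, derivative_GF, rescale_neg_one_exp_eq_GF]
  simp [pow_succ]

theorem oneSubExpNeg_ne_zero : oneSubExpNeg ≠ 0 := fun h => by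
  simpa [oneSubExpNeg_eq_GF, coeff_GF] using congrArg (coeff 1) h

theorem polyLogC_eq_subst_polylog (j : ℤ) : polyLogC j = (polylog ℂ j).subst oneSubExpNeg := by
  ext n
  rw [coeff_subst_polylog constantCoeff_oneSubExpNeg, polyLogC, coeff_mk]

theorem constantCoeff_polyLogC (j : ℤ) : constantCoeff (polyLogC j) = 0 := by
  rw [← coeff_zero_eq_constantCoeff_apply, polyLogC, coeff_mk]
  simp

/-- `d/dt Li_k(1 - e^{-t}) = e^{-t} Li_{k-1}(1 - e^{-t}) / (1 - e^{-t})`. -/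
theorem derivative_polyLogC {k : ℤ} {B : ℕ → ℂ} (hB : oneSubExpNeg * GF B = polyLogC (k - 1)) :
    d⁄dX ℂ (polyLogC k) = GF (binomConv B fun n => (-1) ^ n) := by
  refine mul_left_cancel₀ oneSubExpNeg_ne_zero ?_
  rw [polyLogC_eq_subst_polylog, mul_derivative_subst_polylog constantCoeff_oneSubExpNeg,
    ← polyLogC_eq_subst_polylog, ← hB, derivative_oneSubExpNeg, rescale_neg_one_exp_eq_GF,
    ← GF_mul_GF, mul_left_comm, mul_comm (GF B)]

theorem binomConv_oneSubExpNeg_succ (a : ℕ → ℂ) (n : ℕ) :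
    binomConv a (fun n => if n = 0 then 0 else -(-1) ^ n) (n + 1)
      = ∑ m ∈ range (n + 1), ((n + 1).choose m : ℂ) * (-1 : ℂ) ^ (n - m) * a m := by
  rw [binomConv, sum_range_succ, Nat.sub_self, if_pos rfl, mul_zero, add_zero]
  refine sum_congr rfl fun m _ => ?_
  rw [show n + 1 - m = n - m + 1 by grind, if_neg (Nat.succ_ne_zero _), pow_succ]
  ring

theorem binomConv_succ_of_eq_zero {a : ℕ → ℂ} (ha : a 0 = 0) (b : ℕ → ℂ) (n : ℕ) :
    binomConv a b (n + 1)
      = ∑ l ∈ range (n + 1), ((n + 1).choose (l + 1) : ℂ) * a (l + 1) * b (n - l) := by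
  rw [binomConv, sum_range_succ', ha, mul_zero, zero_mul, add_zero]
  simp only [Nat.add_sub_add_right]

theorem stmt9_general (lam : ℂ) (r k : ℤ) (Tn Bn Hn : ℕ → ℂ)
    (hTn : oneSubExpNeg * GF Tn = zpowS (feBase lam) r * polyLogC k)
    (hBn : oneSubExpNeg * GF Bn = polyLogC (k - 1))
    (hHn : GF Hn = zpowS (feBase lam) r) :
    ∀ n : ℕ,
      ∑ m ∈ range (n + 1), ((n + 1).choose m : ℂ) * (-1 : ℂ) ^ (n - m) * Tn m
      = ∑ l ∈ range (n + 1), ∑ m ∈ range (l + 1),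
          (-1 : ℂ) ^ (l - m) * (l.choose m : ℂ) * ((n + 1).choose (l + 1) : ℂ) * Bn m * Hn (n - l) := by
  intro n
  set L : ℕ → ℂ := fun n => n.factorial * coeff n (polyLogC k)
  have hL : GF L = polyLogC k := GF_factorial_mul_coeff _
  have hL0 : L 0 = 0 := by simp [L, coeff_zero_eq_constantCoeff_apply, constantCoeff_polyLogC]
  have hLsucc : (fun l => L (l + 1)) = binomConv Bn fun n => (-1) ^ n :=
    GF_injective (by rw [← derivative_GF, hL, derivative_polyLogC hBn])
  have hconv : binomConv Tn (fun n => if n = 0 then 0 else -(-1) ^ n) = binomConv L Hn :=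
    GF_injective (by rw [← GF_mul_GF, ← GF_mul_GF, ← oneSubExpNeg_eq_GF, mul_comm, hTn, hL, hHn,
      mul_comm])
  rw [← binomConv_oneSubExpNeg_succ, hconv, binomConv_succ_of_eq_zero hL0]
  refine sum_congr rfl fun l _ => ?_
  rw [congrFun hLsucc l, binomConv, mul_sum, sum_mul]
  exact sum_congr rfl fun m _ => by ring

theorem stmt9 (lam : ℂ) (hlam : lam ≠ 1) (r k : ℤ) (Tn Bn Hn : ℕ → ℂ)
    (hTn : oneSubExpNeg * GF Tn = zpowS (feBase lam) r * polyLogC k)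
    (hBn : oneSubExpNeg * GF Bn = polyLogC (k - 1))
    (hHn : GF Hn = zpowS (feBase lam) r) :
    ∀ n : ℕ,
      ∑ m ∈ range (n + 1), ((n + 1).choose m : ℂ) * (-1 : ℂ) ^ (n - m) * Tn m
      = ∑ l ∈ range (n + 1), ∑ m ∈ range (l + 1),
          (-1 : ℂ) ^ (l - m) * (l.choose m : ℂ) * ((n + 1).choose (l + 1) : ℂ) * Bn m * Hn (n - l) :=
  stmt9_general lam r k Tn Bn Hn hTn hBn hHn
end

section
/- For n ≥ 0, T_n^{(r,k)}(x|λ) = Σ_{m=0}^{n} [Σ_{l=0}^{n-m} (-1)^l C(n,l+m) S₂(l+m,m) T_{n-m-l}^{(r,k)}(λ)] x^{[m]}, where x^{[m]} = x(x+1)···(x+m-1) is the rising factorial. -/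
open PowerSeries Finset

theorem GF_mul (f g : ℕ → ℂ) :
    GF f * GF g = GF fun n => ∑ i ∈ range (n + 1), (n.choose i : ℂ) * f i * g (n - i) := by
  ext n
  simp only [coeff_mul, Nat.sum_antidiagonal_eq_sum_range_succ_mk, GF, coeff_mk, sum_div]
  refine sum_congr rfl fun i hi => ?_
  have hin : i ≤ n := Nat.lt_succ_iff.mp (mem_range.mp hi)
  rw [Nat.cast_choose ℂ hin]
  have : (i.factorial : ℂ) ≠ 0 := Nat.cast_ne_zero.mpr i.factorial_ne_zero
  have : ((n - i).factorial : ℂ) ≠ 0 := Nat.cast_ne_zero.mpr (n - i).factorial_ne_zero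
  have : (n.factorial : ℂ) ≠ 0 := Nat.cast_ne_zero.mpr n.factorial_ne_zero
  field_simp

theorem expX_eq_GF (x : ℂ) : expX x = GF (x ^ ·) := by
  ext n
  simp [expX, GF, coeff_rescale, coeff_exp, div_eq_mul_inv]

theorem derivative_exp {A : Type*} [CommRing A] [Algebra ℚ A] : d⁄dX A (exp A) = exp A := by
  ext n
  rw [coeff_derivative, coeff_exp, coeff_exp, ← Nat.cast_succ, ← map_natCast (algebraMap ℚ A),
    ← map_mul, Nat.factorial_succ]
  congr 1
  have : (n.factorial : ℚ) ≠ 0 := by positivity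
  field_simp
  push_cast
  ring

theorem derivative_exp_sub_one_pow {A : Type*} [CommRing A] [Algebra ℚ A] (m : ℕ) :
    d⁄dX A ((exp A - 1) ^ (m + 1)) = (m + 1) • ((exp A - 1) ^ (m + 1) + (exp A - 1) ^ m) := by
  rw [Derivation.leibniz_pow, map_sub, derivative_exp, Derivation.map_one_eq_zero, sub_zero,
    Nat.add_sub_cancel]
  simp only [nsmul_eq_mul, smul_eq_mul]
  ring

theorem S2_succ_succ (n m : ℕ) : S2 (n + 1) (m + 1) = (m + 1 : ℂ) * S2 n (m + 1) + S2 n m := by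
  have h := congrArg (coeff n) (derivative_exp_sub_one_pow (A := ℂ) m)
  rw [coeff_derivative, map_nsmul, map_add, nsmul_eq_mul] at h
  simp only [S2, Nat.factorial_succ]
  push_cast at h ⊢
  have : (m + 1 : ℂ) ≠ 0 := Nat.cast_add_one_ne_zero m
  have : (m.factorial : ℂ) ≠ 0 := Nat.cast_ne_zero.mpr m.factorial_ne_zero
  linear_combination (norm := (field_simp; ring)) (n.factorial / ((m + 1) * m.factorial : ℂ)) * h

theorem S2_eq_stirlingSecond (n m : ℕ) : S2 n m = Nat.stirlingSecond n m := by
  induction n generalizing m with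
  | zero => cases m <;> simp [S2]
  | succ n ih =>
    cases m with
    | zero => simp [S2, coeff_one]
    | succ m => rw [S2_succ_succ, ih, ih, Nat.stirlingSecond_succ_succ]; push_cast; ring

section

variable {R : Type*} [CommRing R]

theorem pow_eq_sum_stirlingSecond_mul_descPochhammer (x : R) (n : ℕ) :
    x ^ n = ∑ m ∈ range (n + 1), (Nat.stirlingSecond n m : R) * (descPochhammer R m).eval x := by
  induction n with
  | zero => simp
  | succ n ih =>
    set D : ℕ → R := fun m => (descPochhammer R m).eval x
    have hxD : ∀ m, x * D m = D (m + 1) + m * D m := fun m => by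
      simp only [D, descPochhammer_succ_eval]; ring
    have hshift : ∑ m ∈ range (n + 1), ((m + 1 : ℕ) : R) * Nat.stirlingSecond n (m + 1) * D (m + 1)
        = ∑ m ∈ range (n + 1), (m : R) * Nat.stirlingSecond n m * D m := by
      have h := sum_range_succ' (fun m => (m : R) * Nat.stirlingSecond n m * D m) (n + 1)
      rw [sum_range_succ, Nat.stirlingSecond_eq_zero_of_lt n.lt_succ_self] at h
      simpa using h.symm
    calc x ^ (n + 1) = ∑ m ∈ range (n + 1), (Nat.stirlingSecond n m : R) * (x * D m) := by
          rw [pow_succ', ih, mul_sum]; exact sum_congr rfl fun m _ => by ring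
      _ = ∑ m ∈ range (n + 1), ((Nat.stirlingSecond n m : R) * D (m + 1)
            + ((m + 1 : ℕ) : R) * Nat.stirlingSecond n (m + 1) * D (m + 1)) := by
          simp only [hxD, mul_add, sum_add_distrib, hshift]; congr 1
          exact sum_congr rfl fun m _ => by ring
      _ = ∑ m ∈ range (n + 2), (Nat.stirlingSecond (n + 1) m : R) * D m := by
          rw [sum_range_succ' _ (n + 1)]
          simp only [Nat.stirlingSecond_succ_succ, Nat.stirlingSecond_succ_zero]
          push_cast
          simp only [zero_mul, add_zero]
          exact sum_congr rfl fun m _ => by ring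

theorem pow_eq_sum_stirlingSecond_mul_prod_add (x : R) {n N : ℕ} (hN : n < N) :
    x ^ n = ∑ m ∈ range N,
      (-1) ^ (n + m) * (Nat.stirlingSecond n m : R) * ∏ i ∈ range m, (x + i) := by
  have hneg : ∀ m, (descPochhammer R m).eval (-x) = (-1) ^ m * ∏ i ∈ range m, (x + i) := fun m => by
    rw [descPochhammer_eval_eq_prod_range, show (-1 : R) ^ m = ∏ _i ∈ range m, (-1 : R) by simp,
      ← prod_mul_distrib]
    exact prod_congr rfl fun i _ => by ring
  rw [← sum_subset (range_subset_range.mpr hN) fun m _ hm => by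
    rw [Nat.stirlingSecond_eq_zero_of_lt (by simpa using hm)]; simp]
  calc x ^ n = (-1) ^ n * (-x) ^ n := by rw [← mul_pow]; simp
    _ = _ := by
      rw [pow_eq_sum_stirlingSecond_mul_descPochhammer (-x), mul_sum]
      exact sum_congr rfl fun m _ => by rw [hneg, pow_add]; ring

theorem sum_choose_mul_pow_eq_sum_prod_add (f : ℕ → R) (x : R) (n : ℕ) :
    ∑ i ∈ range (n + 1), (n.choose i : R) * x ^ i * f (n - i) = ∑ m ∈ range (n + 1),
      (∑ l ∈ range (n - m + 1),
        (-1 : R) ^ l * (n.choose (l + m) : R) * Nat.stirlingSecond (l + m) m * f (n - m - l)) *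
      ∏ i ∈ range m, (x + i) := by
  calc _ = ∑ i ∈ range (n + 1), ∑ m ∈ range (n + 1), (n.choose i : R) * f (n - i) *
        ((-1) ^ (i + m) * Nat.stirlingSecond i m) * ∏ j ∈ range m, (x + j) := by
        refine sum_congr rfl fun i hi => ?_
        rw [pow_eq_sum_stirlingSecond_mul_prod_add x (mem_range.mp hi), mul_sum, sum_mul]
        exact sum_congr rfl fun m _ => by ring
    _ = _ := by
      rw [sum_comm]
      refine sum_congr rfl fun m hm => ?_
      have hmn : m ≤ n := Nat.lt_succ_iff.mp (mem_range.mp hm)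
      rw [← sum_mul, show n + 1 = m + (n - m + 1) by omega, sum_range_add,
        sum_eq_zero fun i hi => by
          rw [Nat.stirlingSecond_eq_zero_of_lt (mem_range.mp hi)]; simp, zero_add]
      congr 1
      refine sum_congr rfl fun l _ => ?_
      rw [add_comm m l, Nat.sub_add_eq, Nat.sub_right_comm, add_assoc, pow_add, ← two_mul, pow_mul,
        neg_one_sq, one_pow, mul_one]
      ring

end

theorem stmt14_general (lam : ℂ) (r k : ℤ) (T : ℕ → ℂ → ℂ)
    (hT : ∀ x : ℂ, oneSubExpNeg * GF (fun n => T n x)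
        = zpowS (feBase lam) (r) * polyLogC (k) * expX x) :
    ∀ (n : ℕ) (x : ℂ),
      T n x = ∑ m ∈ range (n + 1),
        (∑ l ∈ range (n - m + 1),
          (-1 : ℂ) ^ l * (n.choose (l + m) : ℂ) * S2 (l + m) m * T (n - m - l) 0) *
        ∏ i ∈ range m, (x + i) := by
  intro n x
  have hGF : GF (fun n => T n x) = expX x * GF (fun n => T n 0) := by
    refine mul_left_cancel₀ oneSubExpNeg_ne_zero ?_
    rw [hT x, mul_left_comm, hT 0, show expX 0 = 1 by simp [expX], mul_one, mul_comm]
  rw [expX_eq_GF, GF_mul] at hGF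
  rw [congrFun (GF_injective hGF) n, sum_choose_mul_pow_eq_sum_prod_add (T · 0)]
  simp only [S2_eq_stirlingSecond]

theorem stmt14 (lam : ℂ) (hlam : lam ≠ 1) (r k : ℤ) (T : ℕ → ℂ → ℂ)
    (hT : ∀ x : ℂ, oneSubExpNeg * GF (fun n => T n x)
        = zpowS (feBase lam) (r) * polyLogC (k) * expX x) :
    ∀ (n : ℕ) (x : ℂ),
      T n x = ∑ m ∈ range (n + 1),
        (∑ l ∈ range (n - m + 1),
          (-1 : ℂ) ^ l * (n.choose (l + m) : ℂ) * S2 (l + m) m * T (n - m - l) 0) *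
        ∏ i ∈ range m, (x + i) :=
  stmt14_general lam r k T hT
end
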